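/- The rectangular parallelepiped P = [0,a] × [0,b] × [0,c] with 0 < a ≤ b ≤ c is m-point homogeneous for every natural m if and only if a² + b² ≠ c². If a² + b² = c², then P is homogeneous (vertex-transitive) but not 2-point homogeneous. -/

import Mathlib

/-!
Label the vertex `(cond p a 0, cond q b 0, cond r c 0)` of the box by
`(p, q, r) : Bool × Bool × Bool`, a group under coordinatewise xor. The squared distance between
the vertices labelled `u` and `v` is the weight of `u + v`: the sum of those of `a², b², c²` whose
coordinate is set.

If `a² + b² ≠ c²`, two labels of equal weight differ by a permutation of the coordinates that
preserves `(a, b, c)`. Translate two distance-matching tuples so that both start at `0`: their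
entries, and the sums of any two entries, are then matched by such permutations. One permutation
matches all entries at once, because the stabiliser of a label other than `0` and `1` has at most
two elements. That permutation, conjugated by the translations, is the isometry.

If `a² + b² = c²`, the face diagonal from `(0,0,0)` to `(a,b,0)` and the edge from `(0,0,0)`
to `(0,0,c)` have the same length. The vertex `(a,0,0)` lies at distances `a` and `b` from the
endpoints of the diagonal, but no vertex lies at distances `a` and `b` from the endpoints of the
edge.
-/

/-- A subset `M` of a metric space is `m`-point homogeneous if every distance-preserving
correspondence between two `m`-tuples of points of `M` is realized by an isometry of `M`. -/
def mPointHomogeneous {X : Type*} [MetricSpace X] (M : Set X) (m : ℕ) : Prop :=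
  ∀ A B : Fin m → ↥M, (∀ i j, dist (A i) (A j) = dist (B i) (B j)) →
    ∃ e : ↥M ≃ᵢ ↥M, ∀ i, e (A i) = B i

/-- The vertex set `{0,a} × {0,b} × {0,c}` of the rectangular parallelepiped
`[0,a] × [0,b] × [0,c]` in `ℝ³`. -/
def boxVerts (a b c : ℝ) : Set (EuclideanSpace ℝ (Fin 3)) :=
  {p | (p 0 = 0 ∨ p 0 = a) ∧ (p 1 = 0 ∨ p 1 = b) ∧ (p 2 = 0 ∨ p 2 = c)}

abbrev Corner := Bool × Bool × Bool

namespace Corner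

lemma add_self : ∀ t : Corner, t + t = 0 := by decide

lemma add_add_add_cancel_right (u v w : Corner) : u + w + (v + w) = u + v := by
  rw [add_add_add_comm, add_self, add_zero]

lemma add_add_cancel_left (u v : Corner) : u + (u + v) = v := by
  rw [← add_assoc, add_self, zero_add]

lemma add_add_cancel_right (u v : Corner) : u + v + v = u := by
  rw [add_assoc, add_self, add_zero]

def swap₁₂ (t : Corner) : Corner := (t.2.1, t.1, t.2.2)
def swap₂₃ (t : Corner) : Corner := (t.1, t.2.2, t.2.1)
def swap₁₃ (t : Corner) : Corner := (t.2.2, t.2.1, t.1)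
def cycle (t : Corner) : Corner := (t.2.1, t.2.2, t.1)
def cycle' (t : Corner) : Corner := (t.2.2, t.1, t.2.1)

/-- With `e₁ ↔ a = b` and `e₂ ↔ b = c`, these are the coordinate permutations preserving `(a, b, c)`
when `a ≤ b ≤ c`. -/
def symmetries (e₁ e₂ : Bool) : List (Corner → Corner) :=
  id :: ((if e₁ then [swap₁₂] else []) ++ (if e₂ then [swap₂₃] else []) ++
    (if e₁ && e₂ then [swap₁₃, cycle, cycle'] else []))

def SameOrbit (e₁ e₂ : Bool) (t t' : Corner) : Prop := ∃ σ ∈ symmetries e₁ e₂, σ t = t'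

instance (e₁ e₂ : Bool) (t t' : Corner) : Decidable (SameOrbit e₁ e₂ t t') := by
  unfold SameOrbit; infer_instance

variable {e₁ e₂ : Bool}

lemma id_mem_symmetries : id ∈ symmetries e₁ e₂ := List.mem_cons_self

lemma exists_inv_mem_symmetries {σ : Corner → Corner} (hσ : σ ∈ symmetries e₁ e₂) :
    ∃ τ ∈ symmetries e₁ e₂, (∀ t, τ (σ t) = t) ∧ ∀ t, σ (τ t) = t := by
  cases e₁ <;> cases e₂ <;> fin_cases hσ <;> decide

lemma exists_comp_mem_symmetries {σ τ : Corner → Corner} (hσ : σ ∈ symmetries e₁ e₂)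
    (hτ : τ ∈ symmetries e₁ e₂) : ∃ ρ ∈ symmetries e₁ e₂, ∀ t, ρ t = σ (τ t) := by
  cases e₁ <;> cases e₂ <;> fin_cases hσ <;> fin_cases hτ <;> decide

lemma map_add_of_mem_symmetries {σ : Corner → Corner} (hσ : σ ∈ symmetries e₁ e₂) (u v : Corner) :
    σ (u + v) = σ u + σ v := by
  revert u v
  cases e₁ <;> cases e₂ <;> fin_cases hσ <;> decide

lemma map_zero_of_mem_symmetries {σ : Corner → Corner} (hσ : σ ∈ symmetries e₁ e₂) : σ 0 = 0 := by
  cases e₁ <;> cases e₂ <;> fin_cases hσ <;> decide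

lemma map_one_of_mem_symmetries {σ : Corner → Corner} (hσ : σ ∈ symmetries e₁ e₂) : σ 1 = 1 := by
  cases e₁ <;> cases e₂ <;> fin_cases hσ <;> decide

lemma exists_mem_symmetries_fix_of_sameOrbit {s u u' : Corner} (h : SameOrbit e₁ e₂ u u')
    (hs : SameOrbit e₁ e₂ (u + s) (u' + s)) : ∃ τ ∈ symmetries e₁ e₂, τ s = s ∧ τ u = u' := by
  suffices ∀ s u u' : Corner, SameOrbit e₁ e₂ u u' ∧ SameOrbit e₁ e₂ (u + s) (u' + s) →
      ∃ τ ∈ symmetries e₁ e₂, τ s = s ∧ τ u = u' from this s u u' ⟨h, hs⟩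
  cases e₁ <;> cases e₂ <;> decide

/-- The stabiliser of a corner other than `0` and `1` has at most two elements, so a symmetry
fixing `s` is determined by whether it moves `v`. -/
lemma eq_of_mem_symmetries_fix {τ τ' : Corner → Corner} (hτ : τ ∈ symmetries e₁ e₂)
    (hτ' : τ' ∈ symmetries e₁ e₂) {s u v : Corner} (hs₀ : s ≠ 0) (hs₁ : s ≠ 1) (hτs : τ s = s)
    (hτ's : τ' s = s) (hv : τ' v ≠ v) (h : SameOrbit e₁ e₂ (u + v) (τ u + τ' v)) :
    τ' u = τ u := by
  suffices ∀ s u v : Corner, s ≠ 0 ∧ s ≠ 1 ∧ τ s = s ∧ τ' s = s ∧ τ' v ≠ v ∧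
      SameOrbit e₁ e₂ (u + v) (τ u + τ' v) → τ' u = τ u from
    this s u v ⟨hs₀, hs₁, hτs, hτ's, hv, h⟩
  cases e₁ <;> cases e₂ <;> fin_cases hτ <;> fin_cases hτ' <;> decide

lemma SameOrbit.apply_right {t t' : Corner} (h : SameOrbit e₁ e₂ t t') {τ : Corner → Corner}
    (hτ : τ ∈ symmetries e₁ e₂) : SameOrbit e₁ e₂ t (τ t') := by
  obtain ⟨σ, hσ, rfl⟩ := h
  obtain ⟨ρ, hρ, hρσ⟩ := exists_comp_mem_symmetries hτ hσ
  exact ⟨ρ, hρ, hρσ t⟩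

section Tuples

variable {ι : Type*} {A B : ι → Corner}

lemma exists_mem_symmetries_of_fixed
    (hAB : ∀ i, SameOrbit e₁ e₂ (A i) (B i))
    (hAB₂ : ∀ i j, SameOrbit e₁ e₂ (A i + A j) (B i + B j))
    {k : ι} (hk : B k = A k) (hk0 : A k ≠ 0) (hk1 : A k ≠ 1) :
    ∃ σ ∈ symmetries e₁ e₂, ∀ i, σ (A i) = B i := by
  by_cases hfix : ∀ i, B i = A i
  · exact ⟨id, id_mem_symmetries, fun i => (hfix i).symm⟩
  obtain ⟨l, hl⟩ := not_forall.mp hfix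
  have fix_k : ∀ i, ∃ τ ∈ symmetries e₁ e₂, τ (A k) = A k ∧ τ (A i) = B i := fun i =>
    exists_mem_symmetries_fix_of_sameOrbit (hAB i) (hk ▸ hAB₂ i k)
  obtain ⟨τ', hτ', hτ'k, hτ'l⟩ := fix_k l
  refine ⟨τ', hτ', fun i => ?_⟩
  obtain ⟨τ, hτ, hτk, hτi⟩ := fix_k i
  rw [← hτi]
  refine eq_of_mem_symmetries_fix hτ hτ' hk0 hk1 hτk hτ'k (v := A l) (by rwa [hτ'l]) ?_
  rw [hτi, hτ'l]
  exact hAB₂ i l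

lemma exists_mem_symmetries_of_sameOrbit
    (hAB : ∀ i, SameOrbit e₁ e₂ (A i) (B i))
    (hAB₂ : ∀ i j, SameOrbit e₁ e₂ (A i + A j) (B i + B j)) :
    ∃ σ ∈ symmetries e₁ e₂, ∀ i, σ (A i) = B i := by
  by_cases hfix : ∀ i, B i = A i
  · exact ⟨id, id_mem_symmetries, fun i => (hfix i).symm⟩
  obtain ⟨k, hk⟩ := not_forall.mp hfix
  obtain ⟨σ, hσ, hσk⟩ := hAB k
  obtain ⟨τ, hτ, hτσ, hστ⟩ := exists_inv_mem_symmetries hσ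
  -- Pulling `B` back by `τ = σ⁻¹` makes `A k` a common fixed point.
  have hk0 : A k ≠ 0 := fun h => hk (by rw [← hσk, h, map_zero_of_mem_symmetries hσ])
  have hk1 : A k ≠ 1 := fun h => hk (by rw [← hσk, h, map_one_of_mem_symmetries hσ])
  obtain ⟨σ₁, hσ₁, hσ₁A⟩ := exists_mem_symmetries_of_fixed (B := τ ∘ B)
    (fun i => (hAB i).apply_right hτ)
    (fun i j => by
      simpa only [Function.comp_apply, map_add_of_mem_symmetries hτ] using
        (hAB₂ i j).apply_right hτ)
    (k := k) (by rw [Function.comp_apply, ← hσk, hτσ]) hk0 hk1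
  obtain ⟨ρ, hρ, hρσ⟩ := exists_comp_mem_symmetries hσ hσ₁
  exact ⟨ρ, hρ, fun i => by rw [hρσ, hσ₁A, Function.comp_apply, hστ]⟩

end Tuples

noncomputable def weight (x y z : ℝ) (t : Corner) : ℝ :=
  cond t.1 x 0 + cond t.2.1 y 0 + cond t.2.2 z 0

section Weight

variable {x y z : ℝ}

lemma weight_nonneg (hx : 0 ≤ x) (hy : 0 ≤ y) (hz : 0 ≤ z) (t : Corner) :
    0 ≤ weight x y z t := by
  obtain ⟨p, q, r⟩ := t
  cases p <;> cases q <;> cases r <;> simp only [weight, cond_true, cond_false] <;> linarith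

lemma weight_apply_of_mem_symmetries (he₁ : e₁ = true → x = y) (he₂ : e₂ = true → y = z)
    {σ : Corner → Corner} (hσ : σ ∈ symmetries e₁ e₂) (t : Corner) :
    weight x y z (σ t) = weight x y z t := by
  obtain ⟨p, q, r⟩ := t
  cases e₁ <;> cases e₂ <;> fin_cases hσ <;>
    simp only [weight, swap₁₂, swap₂₃, swap₁₃, cycle, cycle', id_eq] <;>
    (try rw [he₁ rfl]) <;> (try rw [he₂ rfl]) <;> ring

lemma weight_add_flip_three_ne (hx : 0 < x) (hxy : x ≤ y) (hyz : y ≤ z) {t : Corner}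
    (ht : weight x y z t = x) : weight x y z (t + (false, false, true)) ≠ y := by
  obtain ⟨p, q, r⟩ := t
  rw [show (p, q, r) + (false, false, true) = (p, q, !r) by cases p <;> cases q <;> cases r <;> rfl]
  intro h
  cases r <;> simp only [weight, Bool.not_false, Bool.not_true, cond_true, cond_false,
    add_zero] at ht h <;> linarith

lemma sameOrbit_of_weight_eq (hx : 0 < x) (hxy : x ≤ y) (hyz : y ≤ z) (hxyz : x + y ≠ z)
    {t t' : Corner} (h : weight x y z t = weight x y z t') :
    SameOrbit (decide (x = y)) (decide (y = z)) t t' := by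
  -- Apart from `x + y = z`, every coincidence of weights is a swap of two equal sides.
  obtain ⟨p, q, r⟩ := t
  obtain ⟨p', q', r'⟩ := t'
  cases p <;> cases q <;> cases r <;> cases p' <;> cases q' <;> cases r' <;>
    simp only [weight, cond_true, cond_false, zero_add, add_zero] at h <;>
    first
    | exact ⟨id, id_mem_symmetries, rfl⟩
    | exact absurd h hxyz
    | exact absurd h.symm hxyz
    | exact ⟨swap₁₂, by simp [symmetries, show x = y by linarith], rfl⟩
    | exact ⟨swap₂₃, by simp [symmetries, show y = z by linarith], rfl⟩
    | exact ⟨swap₁₃, by simp [symmetries, show x = y by linarith, show y = z by linarith], rfl⟩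
    | (exfalso; linarith)

theorem exists_weight_preserving_extension (hx : 0 < x) (hxy : x ≤ y) (hyz : y ≤ z)
    (hxyz : x + y ≠ z) {ι : Type*} (α β : ι → Corner)
    (h : ∀ i j, weight x y z (α i + α j) = weight x y z (β i + β j)) :
    ∃ g : Corner → Corner, (∀ u v, weight x y z (g u + g v) = weight x y z (u + v)) ∧
      ∀ i, g (α i) = β i := by
  rcases isEmpty_or_nonempty ι with _ | ⟨⟨i₀⟩⟩
  · exact ⟨id, fun _ _ => rfl, isEmptyElim⟩
  obtain ⟨σ, hσ, hσα⟩ := exists_mem_symmetries_of_sameOrbit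
    (A := fun i => α i + α i₀) (B := fun i => β i + β i₀)
    (fun i => sameOrbit_of_weight_eq hx hxy hyz hxyz (h i i₀))
    (fun i j => by
      simpa only [add_add_add_cancel_right] using sameOrbit_of_weight_eq hx hxy hyz hxyz (h i j))
  refine ⟨fun v => σ (v + α i₀) + β i₀, fun u v => ?_, fun i => ?_⟩
  · rw [add_add_add_cancel_right, ← map_add_of_mem_symmetries hσ,
      weight_apply_of_mem_symmetries of_decide_eq_true of_decide_eq_true hσ,
      add_add_add_cancel_right]
  · simp only [hσα i, add_add_cancel_right]

end Weight

end Corner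

open Corner

lemma cond_eq_zero_or_eq (p : Bool) (r : ℝ) : cond p r 0 = 0 ∨ cond p r 0 = r := by
  cases p <;> simp

lemma exists_cond_eq {r s : ℝ} (h : s = 0 ∨ s = r) : ∃ p : Bool, cond p r 0 = s := by
  rcases h with rfl | rfl
  exacts [⟨false, rfl⟩, ⟨true, rfl⟩]

lemma cond_zero_injective {r : ℝ} (hr : r ≠ 0) :
    Function.Injective (fun p : Bool => cond p r 0) := by
  intro p q
  cases p <;> cases q <;> simp [hr, hr.symm]

lemma cond_sub_cond_sq (p q : Bool) (r : ℝ) :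
    (cond p r 0 - cond q r 0) ^ 2 = cond (p + q) (r ^ 2) 0 := by
  change _ = cond (xor p q) _ _
  cases p <;> cases q <;> simp

noncomputable def corner (a b c : ℝ) (t : Corner) : EuclideanSpace ℝ (Fin 3) :=
  !₂[cond t.1 a 0, cond t.2.1 b 0, cond t.2.2 c 0]

lemma corner_mem_boxVerts (a b c : ℝ) (t : Corner) : corner a b c t ∈ boxVerts a b c := by
  simpa [corner, boxVerts] using
    ⟨cond_eq_zero_or_eq t.1 a, cond_eq_zero_or_eq t.2.1 b, cond_eq_zero_or_eq t.2.2 c⟩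

lemma dist_corner (a b c : ℝ) (u v : Corner) :
    dist (corner a b c u) (corner a b c v) = √(weight (a ^ 2) (b ^ 2) (c ^ 2) (u + v)) := by
  simp only [EuclideanSpace.dist_eq, Fin.sum_univ_three, Real.dist_eq, sq_abs, corner]
  simp [cond_sub_cond_sq, weight]

lemma exists_corner_eq {a b c : ℝ} {p : EuclideanSpace ℝ (Fin 3)} (hp : p ∈ boxVerts a b c) :
    ∃ t, corner a b c t = p := by
  obtain ⟨⟨p₁, h₁⟩, ⟨p₂, h₂⟩, ⟨p₃, h₃⟩⟩ :=
    And.imp exists_cond_eq (And.imp exists_cond_eq exists_cond_eq) hp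
  refine ⟨(p₁, p₂, p₃), ?_⟩
  ext i
  fin_cases i <;> simp [corner, h₁, h₂, h₃]

lemma corner_injective {a b c : ℝ} (ha : a ≠ 0) (hb : b ≠ 0) (hc : c ≠ 0) :
    Function.Injective (corner a b c) := by
  intro ⟨p, q, r⟩ ⟨p', q', r'⟩ h
  have h₀ : cond p a 0 = cond p' a 0 := by simpa [corner] using congrArg (· 0) h
  have h₁ : cond q b 0 = cond q' b 0 := by simpa [corner] using congrArg (· 1) h
  have h₂ : cond r c 0 = cond r' c 0 := by simpa [corner] using congrArg (· 2) h
  rw [cond_zero_injective ha h₀, cond_zero_injective hb h₁, cond_zero_injective hc h₂]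

noncomputable def cornerEquiv {a b c : ℝ} (ha : a ≠ 0) (hb : b ≠ 0) (hc : c ≠ 0) :
    Corner ≃ boxVerts a b c :=
  Equiv.ofBijective (fun t => ⟨corner a b c t, corner_mem_boxVerts a b c t⟩)
    ⟨fun _ _ h => corner_injective ha hb hc (congrArg Subtype.val h),
      fun p => (exists_corner_eq p.2).imp fun _ ht => Subtype.ext ht⟩

section Box

variable {a b c : ℝ} (ha : a ≠ 0) (hb : b ≠ 0) (hc : c ≠ 0)

@[simp]
lemma coe_cornerEquiv (t : Corner) :
    (cornerEquiv ha hb hc t : EuclideanSpace ℝ (Fin 3)) = corner a b c t :=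
  rfl

lemma dist_cornerEquiv_eq_iff {u v u' v' : Corner} :
    dist (cornerEquiv ha hb hc u) (cornerEquiv ha hb hc v) =
        dist (cornerEquiv ha hb hc u') (cornerEquiv ha hb hc v') ↔
      weight (a ^ 2) (b ^ 2) (c ^ 2) (u + v) = weight (a ^ 2) (b ^ 2) (c ^ 2) (u' + v') := by
  simp only [Subtype.dist_eq, coe_cornerEquiv, dist_corner]
  exact Real.sqrt_inj (weight_nonneg (sq_nonneg a) (sq_nonneg b) (sq_nonneg c) _)
    (weight_nonneg (sq_nonneg a) (sq_nonneg b) (sq_nonneg c) _)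

lemma exists_isometryEquiv_of_weight {g : Corner → Corner}
    (hg : ∀ u v,
      weight (a ^ 2) (b ^ 2) (c ^ 2) (g u + g v) = weight (a ^ 2) (b ^ 2) (c ^ 2) (u + v)) :
    ∃ e : boxVerts a b c ≃ᵢ boxVerts a b c,
      ∀ t, e (cornerEquiv ha hb hc t) = cornerEquiv ha hb hc (g t) := by
  set E := cornerEquiv ha hb hc
  set f : boxVerts a b c → boxVerts a b c := fun p => E (g (E.symm p))
  have hf : Isometry f := Isometry.of_dist_eq fun p q => by
    obtain ⟨u, rfl⟩ := E.surjective p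
    obtain ⟨v, rfl⟩ := E.surjective q
    simpa only [f, E, Equiv.symm_apply_apply, dist_cornerEquiv_eq_iff] using hg u v
  have : Finite (boxVerts a b c) := Finite.of_equiv _ E
  exact ⟨⟨Equiv.ofBijective f ⟨hf.injective, Finite.surjective_of_injective hf.injective⟩, hf⟩,
    fun t => congrArg (E ∘ g) (E.symm_apply_apply t)⟩

end Box

theorem exists_isometryEquiv_boxVerts_apply_eq {a b c : ℝ} (ha : a ≠ 0) (hb : b ≠ 0) (hc : c ≠ 0)
    (p q : boxVerts a b c) :
    ∃ e : boxVerts a b c ≃ᵢ boxVerts a b c, e p = q := by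
  set E := cornerEquiv ha hb hc
  obtain ⟨e, he⟩ := exists_isometryEquiv_of_weight ha hb hc (g := (· + (E.symm p + E.symm q)))
    fun u v => by rw [add_add_add_cancel_right]
  refine ⟨e, ?_⟩
  rw [← E.apply_symm_apply p, he, add_add_cancel_left, E.apply_symm_apply]

theorem mPointHomogeneous_boxVerts {a b c : ℝ} (ha : 0 < a) (hab : a ≤ b) (hbc : b ≤ c)
    (h : a ^ 2 + b ^ 2 ≠ c ^ 2) (m : ℕ) :
    mPointHomogeneous (boxVerts a b c) m := by
  have hb : 0 < b := ha.trans_le hab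
  have hc : 0 < c := hb.trans_le hbc
  set E := cornerEquiv ha.ne' hb.ne' hc.ne'
  intro A B hAB
  obtain ⟨g, hg, hgA⟩ := exists_weight_preserving_extension (by positivity)
    (pow_le_pow_left₀ ha.le hab 2) (pow_le_pow_left₀ hb.le hbc 2) h (E.symm ∘ A) (E.symm ∘ B)
    fun i j => by
      rw [← dist_cornerEquiv_eq_iff ha.ne' hb.ne' hc.ne']
      simpa only [Function.comp_apply, E, Equiv.apply_symm_apply] using hAB i j
  obtain ⟨e, he⟩ := exists_isometryEquiv_of_weight ha.ne' hb.ne' hc.ne' hg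
  refine ⟨e, fun i => ?_⟩
  rw [← E.apply_symm_apply (A i), he, ← E.apply_symm_apply (B i)]
  exact congrArg E (hgA i)

theorem not_mPointHomogeneous_two_boxVerts {a b c : ℝ} (ha : 0 < a) (hab : a ≤ b) (hbc : b ≤ c)
    (h : a ^ 2 + b ^ 2 = c ^ 2) :
    ¬ mPointHomogeneous (boxVerts a b c) 2 := by
  have hb : 0 < b := ha.trans_le hab
  have hc : 0 < c := hb.trans_le hbc
  set E := cornerEquiv ha.ne' hb.ne' hc.ne'
  intro hhom
  obtain ⟨e, he⟩ := hhom ![E 0, E (true, true, false)] ![E 0, E (false, false, true)] (by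
    intro i j
    fin_cases i <;> fin_cases j <;>
      simp [E, dist_cornerEquiv_eq_iff, weight, h, dist_comm])
  set w := E (true, false, false)
  obtain ⟨t, ht⟩ := E.surjective (e w)
  have h₀ := e.dist_eq (E 0) w
  have h₁ := e.dist_eq (E (true, true, false)) w
  rw [show e (E 0) = E 0 from he 0, ← ht, dist_cornerEquiv_eq_iff] at h₀
  rw [show e (E (true, true, false)) = E (false, false, true) from he 1, ← ht,
    dist_cornerEquiv_eq_iff] at h₁
  rw [zero_add, show weight (a ^ 2) (b ^ 2) (c ^ 2) (0 + (true, false, false)) = a ^ 2 by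
    simp [weight]] at h₀
  rw [add_comm, show ((true, true, false) + (true, false, false) : Corner) = (false, true, false)
    from rfl, show weight (a ^ 2) (b ^ 2) (c ^ 2) (false, true, false) = b ^ 2 by
      simp [weight]] at h₁
  exact weight_add_flip_three_ne (by positivity) (pow_le_pow_left₀ ha.le hab 2)
    (pow_le_pow_left₀ hb.le hbc 2) h₀ h₁

theorem stmt_15 (a b c : ℝ) (ha : 0 < a) (hab : a ≤ b) (hbc : b ≤ c) :
    ((∀ m : ℕ, mPointHomogeneous (boxVerts a b c) m) ↔ a ^ 2 + b ^ 2 ≠ c ^ 2) ∧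
    (a ^ 2 + b ^ 2 = c ^ 2 →
      ((∀ p q : ↥(boxVerts a b c), ∃ e : ↥(boxVerts a b c) ≃ᵢ ↥(boxVerts a b c), e p = q) ∧
       ¬ mPointHomogeneous (boxVerts a b c) 2)) := by
  have hb : 0 < b := ha.trans_le hab
  have hc : 0 < c := hb.trans_le hbc
  exact ⟨⟨fun hall h => not_mPointHomogeneous_two_boxVerts ha hab hbc h (hall 2),
      mPointHomogeneous_boxVerts ha hab hbc⟩,
    fun h => ⟨exists_isometryEquiv_boxVerts_apply_eq ha.ne' hb.ne' hc.ne',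
      not_mPointHomogeneous_two_boxVerts ha hab hbc h⟩⟩
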